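/- arXiv:1710.00282 — 5 statements merged into one kernel-verified Lean document; each statement's English description precedes it below -/
import Mathlib

section
/- Let 0 < α < 1 and f ∈ C^(1,α)([0,1]) with |f(t)| ≤ C t^(1+α) for all t ∈ [0,1] and some constant C. Then the function t ↦ f(t)/t (extended by 0 at t = 0) belongs to C^α([0,1]). -/
open Real Set Topology Filter

lemma holder_dist_le_aux {K r : NNReal} {φ : ℝ → ℝ} {s : Set ℝ} (h : HolderOnWith K r φ s)
    {x y : ℝ} (hx : x ∈ s) (hy : y ∈ s) : dist (φ x) (φ y) ≤ K * dist x y ^ (r : ℝ) := by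
  have h2 := h.edist_le hx hy
  rw [edist_dist, edist_dist, ENNReal.ofReal_rpow_of_nonneg dist_nonneg r.coe_nonneg,
    ← ENNReal.ofReal_coe_nnreal, ← ENNReal.ofReal_mul K.coe_nonneg] at h2
  exact (ENNReal.ofReal_le_ofReal_iff (by positivity)).mp h2

lemma holderOnWith_of_dist_aux {K r : NNReal} {φ : ℝ → ℝ} {s : Set ℝ}
    (h : ∀ x ∈ s, ∀ y ∈ s, dist (φ x) (φ y) ≤ K * dist x y ^ (r : ℝ)) :
    HolderOnWith K r φ s := by
  intro x hx y hy
  rw [edist_dist, edist_dist, ENNReal.ofReal_rpow_of_nonneg dist_nonneg r.coe_nonneg,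
    ← ENNReal.ofReal_coe_nnreal, ← ENNReal.ofReal_mul K.coe_nonneg]
  exact ENNReal.ofReal_le_ofReal (h x hx y hy)

theorem stmt4 (α : ℝ) (hα0 : 0 < α) (hα1 : α < 1) (f f' : ℝ → ℝ)
    (hderiv : ∀ t ∈ Set.Icc (0:ℝ) 1, HasDerivWithinAt f (f' t) (Set.Icc 0 1) t)
    (hf' : ∃ K : NNReal, HolderOnWith K (Real.toNNReal α) f' (Set.Icc 0 1))
    (C : ℝ) (hbound : ∀ t ∈ Set.Icc (0:ℝ) 1, |f t| ≤ C * t ^ (1 + α)) :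
    ∃ K : NNReal, HolderOnWith K (Real.toNNReal α)
      (fun t => if t = 0 then 0 else f t / t) (Set.Icc 0 1) := by
  obtain ⟨K, hK⟩ := hf'
  set g : ℝ → ℝ := fun t => if t = 0 then 0 else f t / t with hg
  have h01 : (0:ℝ) ∈ Icc (0:ℝ) 1 := ⟨le_refl 0, zero_le_one⟩
  have hcoe : ((Real.toNNReal α : NNReal) : ℝ) = α := Real.coe_toNNReal α hα0.le
  have hf0 : f 0 = 0 := by
    have h := hbound 0 h01
    rw [Real.zero_rpow (by positivity)] at h
    have := abs_nonneg (f 0)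
    simp only [mul_zero] at h
    exact abs_eq_zero.mp (le_antisymm h this)
  have hC : 0 ≤ C := by
    have h := hbound 1 ⟨zero_le_one, le_refl 1⟩
    rw [Real.one_rpow, mul_one] at h
    linarith [abs_nonneg (f 1)]
  -- f' 0 = 0
  have hd0 : HasDerivWithinAt f 0 (Icc 0 1) 0 := by
    rw [hasDerivWithinAt_iff_tendsto_slope]
    apply squeeze_zero_norm' (a := fun t => C * t ^ α)
    · filter_upwards [eventually_mem_nhdsWithin] with t ht
      obtain ⟨⟨ht0, ht1⟩, htne⟩ := ht
      have htpos : 0 < t := lt_of_le_of_ne ht0 (Ne.symm htne)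
      have : slope f 0 t = f t / t := by
        simp [slope_def_field, hf0]
      rw [this, Real.norm_eq_abs, abs_div, abs_of_pos htpos]
      rw [div_le_iff₀ htpos]
      calc |f t| ≤ C * t ^ (1 + α) := hbound t ⟨ht0, ht1⟩
        _ = C * t ^ α * t := by
            rw [Real.rpow_add htpos, Real.rpow_one]; ring
    · have hcont : ContinuousAt (fun x : ℝ => C * x ^ α) 0 :=
        continuousAt_const.mul (Real.continuousAt_rpow_const 0 α (Or.inr hα0.le))
      have hT : Filter.Tendsto (fun x : ℝ => C * x ^ α) (𝓝[Icc (0:ℝ) 1 \ {0}] 0)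
          (𝓝 (C * (0:ℝ) ^ α)) := hcont.continuousWithinAt
      rw [Real.zero_rpow hα0.ne', mul_zero] at hT
      exact hT
  have hf'0 : f' 0 = 0 :=
    ((uniqueDiffOn_Icc zero_lt_one) 0 h01).eq_deriv _ (hderiv 0 h01) hd0
  -- |f' t| ≤ K * t ^ α on [0,1]
  have hf'bound : ∀ t ∈ Icc (0:ℝ) 1, |f' t| ≤ K * t ^ α := by
    intro t ht
    have h := holder_dist_le_aux hK ht h01
    rw [hf'0, hcoe, Real.dist_eq, Real.dist_eq, sub_zero, sub_zero,
      abs_of_nonneg ht.1] at h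
    exact h
  -- key pointwise bound for x ≤ y
  have key : ∀ x ∈ Icc (0:ℝ) 1, ∀ y ∈ Icc (0:ℝ) 1, x ≤ y →
      |g y - g x| ≤ ((K : ℝ) + C) * (y - x) ^ α := by
    intro x hx y hy hxy
    rcases eq_or_lt_of_le hxy with rfl | hlt
    · simp only [sub_self]
      rw [Real.zero_rpow hα0.ne']
      simp
    have hysub : 0 < y - x := sub_pos.mpr hlt
    have hypos : 0 < y := lt_of_le_of_lt hx.1 hlt
    rcases eq_or_lt_of_le hx.1 with hx0 | hxpos
    · -- x = 0
      have hx0 : x = 0 := hx0.symm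
      subst hx0
      have hgy : g y = f y / y := by simp [hg, hypos.ne']
      have hg0 : g 0 = 0 := by simp [hg]
      rw [hgy, hg0, sub_zero, abs_div, abs_of_pos hypos, sub_zero, div_le_iff₀ hypos]
      calc |f y| ≤ C * y ^ (1 + α) := hbound y hy
        _ = C * y ^ α * y := by rw [Real.rpow_add hypos, Real.rpow_one]; ring
        _ ≤ ((K : ℝ) + C) * y ^ α * y := by
            have h1 : (0:ℝ) ≤ K := K.coe_nonneg
            have hyα : (0:ℝ) ≤ y ^ α := Real.rpow_nonneg hypos.le α
            nlinarith [mul_nonneg hyα hypos.le]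
    · -- 0 < x < y
      have hgy : g y = f y / y := by simp [hg, hypos.ne']
      have hgx : g x = f x / x := by simp [hg, hxpos.ne']
      -- MVT bound
      have hMVT : |f y - f x| ≤ (K * y ^ α) * (y - x) := by
        have hsub : Icc x y ⊆ Icc (0:ℝ) 1 := Icc_subset_Icc hx.1 hy.2
        have := Convex.norm_image_sub_le_of_norm_hasDerivWithin_le
          (f := f) (f' := f') (s := Icc x y) (C := (K : ℝ) * y ^ α)
          (fun u hu => (hderiv u (hsub hu)).mono hsub)
          (fun u hu => by
            rw [Real.norm_eq_abs]
            refine (hf'bound u (hsub hu)).trans ?_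
            have : u ^ α ≤ y ^ α := Real.rpow_le_rpow (hsub hu).1 hu.2 hα0.le
            nlinarith [K.coe_nonneg])
          (convex_Icc x y) (left_mem_Icc.mpr hxy) (right_mem_Icc.mpr hxy)
        rw [Real.norm_eq_abs, Real.norm_eq_abs, abs_of_pos hysub] at this
        exact this
      -- hbound at x
      have hfx : |f x| ≤ C * x ^ α * x := by
        calc |f x| ≤ C * x ^ (1 + α) := hbound x hx
          _ = C * x ^ α * x := by rw [Real.rpow_add hxpos, Real.rpow_one]; ring
      -- key power inequality
      have hkey : ∀ z : ℝ, 0 ≤ z → z ≤ y → z ^ α * (y - x) ≤ y * (y - x) ^ α := by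
        intro z hz0 hzy
        have h1 : (y - x) ^ (1 - α) * (y - x) ^ α = y - x := by
          rw [← Real.rpow_add hysub]; norm_num
        have h2 : z ^ α * (y - x) ^ (1 - α) ≤ y ^ α * y ^ (1 - α) := by
          apply mul_le_mul (Real.rpow_le_rpow hz0 hzy hα0.le)
            (Real.rpow_le_rpow hysub.le (by linarith [hx.1]) (by linarith))
            (Real.rpow_nonneg hysub.le _) (Real.rpow_nonneg hypos.le _)
        have h3 : y ^ α * y ^ (1 - α) = y := by
          rw [← Real.rpow_add hypos]; norm_num
        have h4 : (0:ℝ) ≤ (y - x) ^ α := Real.rpow_nonneg hysub.le α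
        calc z ^ α * (y - x) = z ^ α * (y - x) ^ (1 - α) * (y - x) ^ α := by
              rw [mul_assoc, h1]
          _ ≤ y ^ α * y ^ (1 - α) * (y - x) ^ α := mul_le_mul_of_nonneg_right h2 h4
          _ = y * (y - x) ^ α := by rw [h3]
      -- decompose
      have hdec : g y - g x = (f y - f x) / y - f x * (y - x) / (x * y) := by
        rw [hgy, hgx]
        field_simp
        ring
      rw [hdec]
      have habs : |(f y - f x) / y - f x * (y - x) / (x * y)| ≤
          |f y - f x| / y + |f x| * (y - x) / (x * y) := by
        refine (abs_sub _ _).trans ?_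
        rw [abs_div, abs_of_pos hypos, abs_div, abs_of_pos (mul_pos hxpos hypos),
          abs_mul, abs_of_pos hysub]
      refine habs.trans ?_
      have hA : |f y - f x| / y ≤ (K : ℝ) * (y - x) ^ α := by
        rw [div_le_iff₀ hypos]
        calc |f y - f x| ≤ (K : ℝ) * y ^ α * (y - x) := hMVT
          _ = (K : ℝ) * (y ^ α * (y - x)) := by ring
          _ ≤ (K : ℝ) * (y * (y - x) ^ α) := by
              exact mul_le_mul_of_nonneg_left (hkey y hypos.le le_rfl) K.coe_nonneg
          _ = (K : ℝ) * (y - x) ^ α * y := by ring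
      have hB : |f x| * (y - x) / (x * y) ≤ C * (y - x) ^ α := by
        rw [div_le_iff₀ (mul_pos hxpos hypos)]
        calc |f x| * (y - x) ≤ C * x ^ α * x * (y - x) := by
              exact mul_le_mul_of_nonneg_right hfx hysub.le
          _ = C * (x ^ α * (y - x)) * x := by ring
          _ ≤ C * (y * (y - x) ^ α) * x :=
              mul_le_mul_of_nonneg_right
                (mul_le_mul_of_nonneg_left (hkey x hxpos.le hxy) hC) hxpos.le
          _ = C * (y - x) ^ α * (x * y) := by ring
      linarith
  -- assemble
  refine ⟨K + Real.toNNReal C, holderOnWith_of_dist_aux ?_⟩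
  have hKC : ((K + Real.toNNReal C : NNReal) : ℝ) = (K : ℝ) + C := by
    push_cast
    rw [Real.coe_toNNReal C hC]
  intro x hx y hy
  rw [hKC, hcoe, Real.dist_eq, Real.dist_eq]
  rcases le_total x y with h | h
  · rw [abs_sub_comm (g x) (g y), abs_sub_comm x y, abs_of_nonneg (sub_nonneg.mpr h)]
    exact key x hx y hy h
  · rw [abs_of_nonneg (sub_nonneg.mpr h)]
    exact key y hy x hx h
end

section
/- Let V : ℝ → [0,∞] be even, integrable, lower semicontinuous, nonincreasing and convex on (0,∞) with lim_{r→0+} V(r) = ∞. Suppose moreover that there exist c, ε > 0 such that V''(s) ≥ c·s^(−(2+a)) for almost every s ∈ (0,ε), for some a ∈ [0,1). Then the Fourier transform V̂(ω) = ∫_ℝ V(t) cos(2πωt) dt satisfies V̂(ω) > 0 for all ω ∈ ℝ. -/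
/-!
By evenness, `∫ V g = 2 ∫_{(0,∞)} V g` with `g t = cos (2πωt)`, which is even and
`P`-antiperiodic for `P = (2ω)⁻¹`. Folding a period `[a, a + 2P]`, `a = 2kP`, onto its first
quarter turns its contribution into `∫₀^{P/2} D_a(t) g(t) dt`, where
`D_a(t) = V(a+t) - V(a+P-t) - V(a+P+t) + V(a+2P-t)`; this is a discrete form of the
summation-by-parts identity for `V̂`. The four points `a+t < a+P-t < a+P+t < a+2P-t` have equal
outer gaps, so convexity of `V` gives `D_a ≥ 0`, and `g > 0` inside the quarter period. If
`D_0(t) = 0` for a small `t`, the secant slopes of `V` on `[t, P-t]` and `[P-t, P+t]` agree,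
making `V` affine on an interval inside `(0, ε)`, where `V'' > 0` almost everywhere; so the first
period contributes strictly. At `ω = 0` the blow-up of `V` at `0` gives `∫ V > 0`.
-/

open Real MeasureTheory Filter Set Function Topology

section Convex

variable {𝕜 : Type*} [Field 𝕜] [LinearOrder 𝕜] [IsStrictOrderedRing 𝕜]
  {s : Set 𝕜} {f : 𝕜 → 𝕜}

theorem ConvexOn.slope_mono_adjacent₂ (hf : ConvexOn 𝕜 s f) {p u v q : 𝕜} (hp : p ∈ s)
    (hq : q ∈ s) (hpu : p < u) (huv : u < v) (hvq : v < q) :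
    (f u - f p) / (u - p) ≤ (f v - f u) / (v - u) ∧
      (f v - f u) / (v - u) ≤ (f q - f v) / (q - v) := by
  have hpq : Icc p q ⊆ s := hf.1.ordConnected.out hp hq
  exact ⟨hf.slope_mono_adjacent hp (hpq ⟨(hpu.trans huv).le, hvq.le⟩) hpu huv,
    hf.slope_mono_adjacent (hpq ⟨hpu.le, (huv.trans hvq).le⟩) hq huv hvq⟩

theorem ConvexOn.add_le_add_of_sub_eq (hf : ConvexOn 𝕜 s f) {p u v q : 𝕜} (hp : p ∈ s)
    (hq : q ∈ s) (hpu : p < u) (huv : u < v) (hvq : v < q) (h : u - p = q - v) :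
    f u + f v ≤ f p + f q := by
  obtain ⟨h₁, h₂⟩ := hf.slope_mono_adjacent₂ hp hq hpu huv hvq
  have := h₁.trans h₂
  rw [h, div_le_div_iff_of_pos_right (sub_pos.2 hvq)] at this
  linarith

theorem ConvexOn.eqOn_affine_of_slope_eq (hf : ConvexOn 𝕜 s f) {x y z : 𝕜} (hx : x ∈ s)
    (hz : z ∈ s) (hxy : x < y) (hyz : y < z)
    (h : (f y - f x) / (y - x) = (f z - f y) / (z - y)) :
    EqOn f (fun w => f x + (f y - f x) / (y - x) * (w - x)) (Ioo x y) := by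
  rintro w ⟨hxw, hwy⟩
  have hxz : Icc x z ⊆ s := hf.1.ordConnected.out hx hz
  have hw : w ∈ s := hxz ⟨hxw.le, (hwy.trans hyz).le⟩
  set m := (f y - f x) / (y - x)
  have hleft : (f w - f x) / (w - x) ≤ m :=
    hf.secant_mono hx hw (hxz ⟨hxy.le, hyz.le⟩) hxw.ne' hxy.ne' hwy.le
  have hright : (f y - f w) / (y - w) ≤ m := h ▸ hf.slope_mono_adjacent hw hz hwy hyz
  rw [div_le_iff₀ (sub_pos.2 hxw)] at hleft
  rw [div_le_iff₀ (sub_pos.2 hwy)] at hright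
  have hm : f y = f x + m * (y - x) := by
    simp only [m]; field_simp [(sub_pos.2 hxy).ne']; ring
  show f w = f x + m * (w - x)
  linarith

theorem ConvexOn.add_lt_add_of_sub_eq (hf : ConvexOn 𝕜 s f) {p u v q : 𝕜} (hp : p ∈ s)
    (hq : q ∈ s) (hpu : p < u) (huv : u < v) (hvq : v < q) (h : u - p = q - v)
    (hna : ∀ m, ¬ EqOn f (fun w => f p + m * (w - p)) (Ioo p u)) :
    f u + f v < f p + f q := by
  refine (hf.add_le_add_of_sub_eq hp hq hpu huv hvq h).lt_of_ne fun heq =>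
    hna ((f u - f p) / (u - p)) ?_
  obtain ⟨h₁, h₂⟩ := hf.slope_mono_adjacent₂ hp hq hpu huv hvq
  have h₃ : (f q - f v) / (q - v) = (f u - f p) / (u - p) := by
    rw [h]; congr 1; linarith
  have hv : v ∈ s := hf.1.ordConnected.out hp hq ⟨(hpu.trans huv).le, hvq.le⟩
  exact hf.eqOn_affine_of_slope_eq hp hv hpu huv (le_antisymm h₁ (h₂.trans h₃.le))

end Convex

theorem not_eqOn_affine_of_ae_deriv_deriv_pos {f : ℝ → ℝ} {s : Set ℝ}
    (hf : ∀ᵐ x, x ∈ s → 0 < deriv (deriv f) x) {α β : ℝ} (hαβ : α < β)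
    (hs : Ioo α β ⊆ s) (b m x₀ : ℝ) : ¬ EqOn f (fun w => b + m * (w - x₀)) (Ioo α β) := by
  intro hEq
  have hderiv : ∀ x ∈ Ioo α β, deriv f x = m := fun x hx => by
    rw [(eventuallyEq_of_mem (isOpen_Ioo.mem_nhds hx) hEq).deriv_eq]
    simp
  have hderiv2 : ∀ x ∈ Ioo α β, deriv (deriv f) x = 0 := fun x hx => by
    rw [(eventuallyEq_of_mem (isOpen_Ioo.mem_nhds hx) hderiv).deriv_eq, deriv_const]
  have hIoo : ∃ᵐ x, x ∈ Ioo α β := by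
    rw [frequently_ae_mem_iff, Real.volume_Ioo]
    simpa using hαβ
  obtain ⟨x, hx, hpos⟩ := (hIoo.and_eventually hf).exists
  exact (hpos (hs hx)).ne' (hderiv2 x hx)

theorem integral_Ioi_pos_of_intervalIntegral_pos {f : ℝ → ℝ} (hf : Integrable f) {L : ℝ}
    (hL : 0 < L) (hnonneg : ∀ k : ℕ, 0 ≤ ∫ x in k * L..(k + 1) * L, f x)
    (hpos : 0 < ∫ x in 0..L, f x) : 0 < ∫ x in Ioi 0, f x := by
  have hlim : Tendsto (fun n : ℕ => ∫ x in 0..n * L, f x) atTop (𝓝 (∫ x in Ioi 0, f x)) :=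
    intervalIntegral_tendsto_integral_Ioi 0 hf.integrableOn
      (tendsto_natCast_atTop_atTop.atTop_mul_const hL)
  refine hpos.trans_le (ge_of_tendsto hlim (eventually_ge_atTop 1 |>.mono fun n hn => ?_))
  have hsum := intervalIntegral.sum_integral_adjacent_intervals (f := f) (μ := volume)
    (a := fun k : ℕ => k * L) (n := n) fun k _ => hf.intervalIntegrable
  simp only [Nat.cast_zero, zero_mul, Nat.cast_succ] at hsum
  rw [← hsum]
  calc ∫ x in 0..L, f x = ∫ x in ((0 : ℕ) : ℝ) * L..((0 : ℕ) + 1) * L, f x := by simp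
    _ ≤ _ := Finset.single_le_sum (fun k _ => hnonneg k) (Finset.mem_range.2 hn)

theorem intervalIntegral.integral_eq_integral_add_reflect {f : ℝ → ℝ} (hf : Integrable f)
    (a h : ℝ) : ∫ x in a..a + h, f x = ∫ t in 0..h / 2, (f (a + t) + f (a + h - t)) := by
  rw [intervalIntegral.integral_add (hf.comp_add_left a).intervalIntegrable
      (hf.comp_sub_left (a + h)).intervalIntegrable,
    intervalIntegral.integral_comp_add_left, intervalIntegral.integral_comp_sub_left, add_zero,
    sub_zero, show a + h - h / 2 = a + h / 2 by ring,
    intervalIntegral.integral_add_adjacent_intervals hf.intervalIntegrable hf.intervalIntegrable]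

def antiperiodicFold (f : ℝ → ℝ) (a P t : ℝ) : ℝ :=
  f (a + t) - f (a + P - t) - f (a + P + t) + f (a + 2 * P - t)

section Fold

variable {f g : ℝ → ℝ} {a P : ℝ}

theorem antiperiodicFold_mul_eq (hg_even : ∀ x, g (-x) = g x)
    (hg : Antiperiodic g P) (ha : Periodic g a) (t : ℝ) :
    antiperiodicFold f a P t * g t = f (a + t) * g (a + t) + f (a + P - t) * g (a + P - t) +
      (f (a + P + t) * g (a + P + t) + f (a + P + P - t) * g (a + P + P - t)) := by
  have h₁ : g (a + t) = g t := by rw [add_comm, ha]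
  have h₂ : g (a + P - t) = -g t := by
    rw [show a + P - t = -t + P + a by ring, ha, hg, hg_even]
  have h₃ : g (a + P + t) = -g t := by rw [show a + P + t = t + P + a by ring, ha, hg]
  have h₄ : g (a + P + P - t) = g t := by
    rw [show a + P + P - t = -t + P + P + a by ring, ha, hg, hg, neg_neg, hg_even]
  simp only [antiperiodicFold, h₁, h₂, h₃, h₄, show a + 2 * P - t = a + P + P - t by ring]
  ring

theorem integrable_antiperiodicFold_mul (hfg : Integrable fun x => f x * g x)
    (hg_even : ∀ x, g (-x) = g x) (hg : Antiperiodic g P) (ha : Periodic g a) :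
    Integrable fun t => antiperiodicFold f a P t * g t := by
  simp only [antiperiodicFold_mul_eq hg_even hg ha]
  exact ((hfg.comp_add_left a).add (hfg.comp_sub_left (a + P))).add
    ((hfg.comp_add_left (a + P)).add (hfg.comp_sub_left (a + P + P)))

theorem integral_mul_antiperiodic_eq_integral_antiperiodicFold
    (hfg : Integrable fun x => f x * g x) (hg_even : ∀ x, g (-x) = g x) (hg : Antiperiodic g P)
    (ha : Periodic g a) :
    ∫ x in a..a + 2 * P, f x * g x = ∫ t in 0..P / 2, antiperiodicFold f a P t * g t := by
  have hint : ∀ b c, IntervalIntegrable (fun t => f (b + t) * g (b + t) + f (c - t) * g (c - t))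
      volume 0 (P / 2) :=
    fun b c => ((hfg.comp_add_left b).add (hfg.comp_sub_left c)).intervalIntegrable
  rw [← intervalIntegral.integral_add_adjacent_intervals (b := a + P) hfg.intervalIntegrable
      hfg.intervalIntegrable, show a + 2 * P = a + P + P by ring,
    intervalIntegral.integral_eq_integral_add_reflect hfg,
    intervalIntegral.integral_eq_integral_add_reflect hfg,
    ← intervalIntegral.integral_add (hint _ _) (hint _ _)]
  simp only [antiperiodicFold_mul_eq hg_even hg ha]

end Fold

theorem antiperiodicFold_nonneg {V : ℝ → ℝ} (hconv : ConvexOn ℝ (Ioi 0) V) {a P t : ℝ}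
    (ha : 0 ≤ a) (ht₀ : 0 < t) (ht : t < P / 2) : 0 ≤ antiperiodicFold V a P t := by
  have := hconv.add_le_add_of_sub_eq (p := a + t) (u := a + P - t) (v := a + P + t)
    (q := a + 2 * P - t) (mem_Ioi.2 (by linarith)) (mem_Ioi.2 (by linarith)) (by linarith)
    (by linarith) (by linarith) (by ring)
  rw [antiperiodicFold]
  linarith

theorem antiperiodicFold_pos {V : ℝ → ℝ} {ε : ℝ} (hconv : ConvexOn ℝ (Ioi 0) V)
    (hV : ∀ᵐ x, x ∈ Ioo 0 ε → 0 < deriv (deriv V) x) {a P t : ℝ}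
    (ha : 0 ≤ a) (ht₀ : 0 < t) (ht : t < P / 2) (htε : a + t < ε) :
    0 < antiperiodicFold V a P t := by
  have hna : ∀ m, ¬ EqOn V (fun w => V (a + t) + m * (w - (a + t))) (Ioo (a + t) (a + P - t)) :=
    fun m hEq => not_eqOn_affine_of_ae_deriv_deriv_pos hV
      (β := min ε (a + P - t)) (lt_min htε (by linarith))
      (fun x hx => ⟨by linarith [hx.1], hx.2.trans_le (min_le_left _ _)⟩) _ _ _
      (hEq.mono (Ioo_subset_Ioo_right (min_le_right _ _)))
  have := hconv.add_lt_add_of_sub_eq (p := a + t) (u := a + P - t) (v := a + P + t)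
    (q := a + 2 * P - t) (mem_Ioi.2 (by linarith)) (mem_Ioi.2 (by linarith)) (by linarith)
    (by linarith) (by linarith) (by ring) hna
  rw [antiperiodicFold]
  linarith

section Antiperiodic

variable {V g : ℝ → ℝ} {P : ℝ}

theorem integral_antiperiodicFold_mul_nonneg (hconv : ConvexOn ℝ (Ioi 0) V)
    (hg_pos : ∀ t ∈ Ioo 0 (P / 2), 0 < g t) {a b : ℝ} (ha : 0 ≤ a) (hb : 0 ≤ b)
    (hbP : b ≤ P / 2) :
    0 ≤ ∫ t in b..P / 2, antiperiodicFold V a P t * g t := by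
  rw [intervalIntegral.integral_of_le hbP, integral_Ioc_eq_integral_Ioo]
  refine setIntegral_nonneg measurableSet_Ioo fun t ht => mul_nonneg ?_ (hg_pos t ?_).le
  · exact antiperiodicFold_nonneg hconv ha (hb.trans_lt ht.1) ht.2
  · exact ⟨hb.trans_lt ht.1, ht.2⟩

theorem integral_mul_antiperiodic_period_nonneg (hconv : ConvexOn ℝ (Ioi 0) V)
    (hVg : Integrable fun x => V x * g x) (hg_even : ∀ x, g (-x) = g x) (hg : Antiperiodic g P)
    (hg_pos : ∀ t ∈ Ioo 0 (P / 2), 0 < g t) (hP : 0 < P) (k : ℕ) :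
    0 ≤ ∫ x in k * (2 * P)..(k + 1) * (2 * P), V x * g x := by
  have hk : Periodic g (k * (2 * P)) := hg.periodic_two_mul.nat_mul k
  rw [add_one_mul, integral_mul_antiperiodic_eq_integral_antiperiodicFold hVg hg_even hg hk]
  exact integral_antiperiodicFold_mul_nonneg hconv hg_pos (by positivity) le_rfl (by positivity)

theorem integral_mul_antiperiodic_first_period_pos (hconv : ConvexOn ℝ (Ioi 0) V)
    (hVg : Integrable fun x => V x * g x) (hg_even : ∀ x, g (-x) = g x) (hg : Antiperiodic g P)
    (hg_pos : ∀ t ∈ Ioo 0 (P / 2), 0 < g t) {ε : ℝ} (hε : 0 < ε)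
    (hV : ∀ᵐ x, x ∈ Ioo 0 ε → 0 < deriv (deriv V) x) (hP : 0 < P) :
    0 < ∫ x in 0..2 * P, V x * g x := by
  have h₀ : Periodic g 0 := fun x => by rw [add_zero]
  have hint : ∀ b c, IntervalIntegrable (fun t => antiperiodicFold V 0 P t * g t) volume b c :=
    fun _ _ => (integrable_antiperiodicFold_mul hVg hg_even hg h₀).intervalIntegrable
  have hδ : 0 < min ε (P / 2) := lt_min hε (by positivity)
  rw [← zero_add (2 * P),
    integral_mul_antiperiodic_eq_integral_antiperiodicFold hVg hg_even hg h₀,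
    ← intervalIntegral.integral_add_adjacent_intervals (hint 0 (min ε (P / 2))) (hint _ _)]
  refine add_pos_of_pos_of_nonneg
    (intervalIntegral.intervalIntegral_pos_of_pos_on (hint _ _) (fun t ht => ?_) hδ)
    (integral_antiperiodicFold_mul_nonneg hconv hg_pos le_rfl hδ.le (min_le_right _ _))
  have htP : t < P / 2 := ht.2.trans_le (min_le_right _ _)
  have htε : 0 + t < ε := by linarith [min_le_left ε (P / 2), ht.2]
  exact mul_pos (antiperiodicFold_pos hconv hV le_rfl ht.1 htP htε) (hg_pos t ⟨ht.1, htP⟩)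

theorem integral_mul_antiperiodic_pos (heven : ∀ x, V (-x) = V x)
    (hconv : ConvexOn ℝ (Ioi 0) V) (hVg : Integrable fun x => V x * g x)
    (hg_even : ∀ x, g (-x) = g x) (hg : Antiperiodic g P)
    (hg_pos : ∀ t ∈ Ioo 0 (P / 2), 0 < g t) {ε : ℝ} (hε : 0 < ε)
    (hV : ∀ᵐ x, x ∈ Ioo 0 ε → 0 < deriv (deriv V) x) (hP : 0 < P) :
    0 < ∫ x, V x * g x := by
  have habs : ∀ x, V |x| * g |x| = V x * g x := fun x => by
    rcases abs_choice x with h | h <;> rw [h]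
    rw [heven, hg_even]
  rw [← integral_congr_ae (Eventually.of_forall habs),
    integral_comp_abs (f := fun x => V x * g x)]
  refine mul_pos two_pos (integral_Ioi_pos_of_intervalIntegral_pos hVg (by positivity)
    (integral_mul_antiperiodic_period_nonneg hconv hVg hg_even hg hg_pos hP) ?_)
  exact integral_mul_antiperiodic_first_period_pos hconv hVg hg_even hg hg_pos hε hV hP

end Antiperiodic

theorem antiperiodic_cos_two_pi_mul {ω : ℝ} (hω : ω ≠ 0) :
    Antiperiodic (fun x => cos (2 * π * ω * x)) (2 * ω)⁻¹ := by
  have h := cos_antiperiodic.const_mul (mul_ne_zero (mul_ne_zero two_ne_zero pi_ne_zero) hω)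
  rwa [show (2 * π * ω)⁻¹ * π = (2 * ω)⁻¹ by field_simp] at h

theorem cos_two_pi_mul_pos {ω : ℝ} (hω : 0 < ω) :
    ∀ t ∈ Ioo 0 ((2 * ω)⁻¹ / 2), 0 < cos (2 * π * ω * t) := by
  rintro t ⟨ht₀, ht⟩
  have : 0 ≤ 2 * π * ω * t := by positivity
  refine cos_pos_of_mem_Ioo ⟨by linarith [pi_pos], ?_⟩
  calc 2 * π * ω * t < 2 * π * ω * ((2 * ω)⁻¹ / 2) := by gcongr
    _ = π / 2 := by field_simp

theorem integral_pos_of_tendsto_nhdsGT_atTop {V : ℝ → ℝ} (hV0 : ∀ t, 0 ≤ V t)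
    (hint : Integrable V) (hblow : Tendsto V (𝓝[>] 0) atTop) : 0 < ∫ t, V t := by
  rw [integral_pos_iff_support_of_nonneg hV0 hint]
  obtain ⟨δ, hδ, hsub⟩ := mem_nhdsGT_iff_exists_Ioo_subset.1 (hblow.eventually_gt_atTop 0)
  calc (0 : ENNReal) < volume (Ioo 0 δ) := by simpa using hδ
    _ ≤ volume (support V) := measure_mono fun x hx => (hsub hx).ne'

theorem stmt8_general (V : ℝ → ℝ) (a c ε : ℝ)
    (hc : 0 < c) (hε : 0 < ε)
    (hV0 : ∀ t, 0 ≤ V t)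
    (heven : ∀ t, V (-t) = V t)
    (hint : Integrable V)
    (hconv : ConvexOn ℝ (Set.Ioi 0) V)
    (hblow : Tendsto V (nhdsWithin 0 (Set.Ioi 0)) atTop)
    (hV'' : ∀ᵐ s ∂(volume : Measure ℝ),
      s ∈ Set.Ioo 0 ε → c * s ^ (-(2 + a)) ≤ deriv (deriv V) s) :
    ∀ ω : ℝ, 0 < ∫ t, V t * Real.cos (2 * Real.pi * ω * t) := by
  have hV : ∀ᵐ s, s ∈ Ioo 0 ε → 0 < deriv (deriv V) s := hV''.mono fun s hs hsε =>
    (mul_pos hc (rpow_pos_of_pos hsε.1 _)).trans_le (hs hsε)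
  have hpos : ∀ ω, 0 < ω → 0 < ∫ t, V t * cos (2 * π * ω * t) := fun ω hω =>
    integral_mul_antiperiodic_pos heven hconv
      (hint.mul_bdd (by fun_prop) (Eventually.of_forall fun t => abs_cos_le_one _))
      (fun x => by simp only [mul_neg, cos_neg]) (antiperiodic_cos_two_pi_mul hω.ne')
      (cos_two_pi_mul_pos hω) hε hV (by positivity)
  intro ω
  rcases lt_trichotomy ω 0 with hω | rfl | hω
  · simpa only [mul_neg, neg_mul, cos_neg] using hpos (-ω) (neg_pos.2 hω)
  · simpa using integral_pos_of_tendsto_nhdsGT_atTop hV0 hint hblow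
  · exact hpos ω hω

theorem stmt8 (V : ℝ → ℝ) (a c ε : ℝ) (ha0 : 0 ≤ a) (ha1 : a < 1)
    (hc : 0 < c) (hε : 0 < ε)
    (hV0 : ∀ t, 0 ≤ V t)
    (heven : ∀ t, V (-t) = V t)
    (hint : Integrable V)
    (hlsc : LowerSemicontinuous V)
    (hmono : AntitoneOn V (Set.Ioi 0))
    (hconv : ConvexOn ℝ (Set.Ioi 0) V)
    (hblow : Tendsto V (nhdsWithin 0 (Set.Ioi 0)) atTop)
    (hV'' : ∀ᵐ s ∂(volume : Measure ℝ),
      s ∈ Set.Ioo 0 ε → c * s ^ (-(2 + a)) ≤ deriv (deriv V) s) :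
    ∀ ω : ℝ, 0 < ∫ t, V t * Real.cos (2 * Real.pi * ω * t) :=
  stmt8_general V a c ε hc hε hV0 heven hint hconv hblow hV''
end

section
/- For all t ∈ (0,1), the principal value integral p.v.∫₀¹ 1/((t−s)√(s(1−s))) ds = 0. -/
/-!
With `c = √(t(1-t))`, `a = √(t(1-s))` and `b = √(s(1-t))`, the function
`F(s) = c⁻¹ log |(a + b) / (a - b)|` is a primitive of `1 / (√(s(1-s)) (t - s))` on `[0,1] \ {t}`.
It vanishes at both endpoints, and the logarithmic singularities of `F(t - ε)` and `F(t + ε)`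
are the same `-c⁻¹ log ε`, so the truncated integral `F(t - ε) - F(t + ε)` tends to `0`.
The integrand has constant sign on each side of `t`, which makes it integrable there.
-/

open Real MeasureTheory Filter Set

/-- `pvIntegral f t L` means `p.v. ∫₀¹ f(s)/(t-s) ds = L`. -/
def pvIntegral (f : ℝ → ℝ) (t L : ℝ) : Prop :=
  Tendsto (fun ε : ℝ => ∫ s in Set.Ioo (0:ℝ) 1 \ Set.Ioo (t - ε) (t + ε), f s / (t - s))
    (nhdsWithin 0 (Set.Ioi 0)) (nhds L)

open Topology

theorem intervalIntegral.integrableOn_deriv_of_nonpos {g g' : ℝ → ℝ} {a b : ℝ}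
    (hcont : ContinuousOn g (Icc a b)) (hderiv : ∀ x ∈ Ioo a b, HasDerivAt g (g' x) x)
    (g'neg : ∀ x ∈ Ioo a b, g' x ≤ 0) : IntegrableOn g' (Ioc a b) := by
  simpa using (integrableOn_deriv_of_nonneg hcont.neg (fun x hx => (hderiv x hx).neg)
    fun x hx => neg_nonneg.2 (g'neg x hx)).neg

theorem Ioo_diff_Ioo_eq_Ioc_union_Ico {a b t ε : ℝ} (ha : a ≤ t - ε) (hb : t + ε ≤ b)
    (hε : 0 < ε) : Ioo a b \ Ioo (t - ε) (t + ε) = Ioc a (t - ε) ∪ Ico (t + ε) b := by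
  ext s
  simp only [Set.mem_sdiff, mem_Ioo, mem_union, mem_Ioc, mem_Ico, not_and_or, not_lt]
  constructor
  · rintro ⟨⟨h1, h2⟩, h | h⟩ <;> [exact Or.inl ⟨h1, h⟩; exact Or.inr ⟨h, h2⟩]
  · rintro (⟨h1, h2⟩ | ⟨h1, h2⟩)
    · exact ⟨⟨h1, by linarith⟩, Or.inl h2⟩
    · exact ⟨⟨by linarith, h2⟩, Or.inr h1⟩

theorem setIntegral_Ioo_diff_Ioo_eq_of_hasDerivAt {F f : ℝ → ℝ} {a b t ε : ℝ}
    (hε : 0 < ε) (ha : a ≤ t - ε) (hb : t + ε ≤ b)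
    (hcont : ContinuousOn F (Icc a b \ {t}))
    (hderiv : ∀ s ∈ Ioo a b, s ≠ t → HasDerivAt F (f s) s)
    (hleft : ∀ s ∈ Ioo a t, 0 ≤ f s) (hright : ∀ s ∈ Ioo t b, f s ≤ 0) :
    ∫ s in Ioo a b \ Ioo (t - ε) (t + ε), f s = (F b - F a) + (F (t - ε) - F (t + ε)) := by
  have hcontL : ContinuousOn F (Icc a (t - ε)) :=
    hcont.mono fun s ⟨h1, h2⟩ => ⟨⟨h1, by linarith⟩, by simp; linarith⟩
  have hcontR : ContinuousOn F (Icc (t + ε) b) :=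
    hcont.mono fun s ⟨h1, h2⟩ => ⟨⟨by linarith, h2⟩, by simp; linarith⟩
  have hderivL : ∀ s ∈ Ioo a (t - ε), HasDerivAt F (f s) s := fun s ⟨h1, h2⟩ =>
    hderiv s ⟨h1, by linarith⟩ (by linarith)
  have hderivR : ∀ s ∈ Ioo (t + ε) b, HasDerivAt F (f s) s := fun s ⟨h1, h2⟩ =>
    hderiv s ⟨by linarith, h2⟩ (by linarith)
  have hintL : IntegrableOn f (Ioc a (t - ε)) :=
    intervalIntegral.integrableOn_deriv_of_nonneg hcontL hderivL
      fun s ⟨h1, h2⟩ => hleft s ⟨h1, by linarith⟩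
  have hintR : IntegrableOn f (Ioc (t + ε) b) :=
    intervalIntegral.integrableOn_deriv_of_nonpos hcontR hderivR
      fun s ⟨h1, h2⟩ => hright s ⟨by linarith, h2⟩
  have hL : ∫ s in Ioc a (t - ε), f s = F (t - ε) - F a := by
    rw [← intervalIntegral.integral_of_le ha]
    exact intervalIntegral.integral_eq_sub_of_hasDerivAt_of_le ha hcontL hderivL
      ((intervalIntegrable_iff_integrableOn_Ioc_of_le ha).2 hintL)
  have hR : ∫ s in Ico (t + ε) b, f s = F b - F (t + ε) := by
    rw [integral_Ico_eq_integral_Ioc, ← intervalIntegral.integral_of_le hb]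
    exact intervalIntegral.integral_eq_sub_of_hasDerivAt_of_le hb hcontR hderivR
      ((intervalIntegrable_iff_integrableOn_Ioc_of_le hb).2 hintR)
  have hintR' : IntegrableOn f (Ico (t + ε) b) :=
    (integrableOn_Icc_iff_integrableOn_Ioc (f := f)).2 hintR |>.mono_set Ico_subset_Icc_self
  rw [Ioo_diff_Ioo_eq_Ioc_union_Ico ha hb hε,
    setIntegral_union _ measurableSet_Ico hintL hintR', hL, hR]
  · ring
  · exact Set.disjoint_left.2 fun s ⟨_, h1⟩ ⟨h2, _⟩ => by linarith

noncomputable def arcsineHilbertArg (t s : ℝ) : ℝ :=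
  t + s - 2 * t * s + 2 * √(t * (1 - t)) * √(s * (1 - s))

-- `(a + b)² = arcsineHilbertArg t s` and `a² - b² = t - s`; `Real.log` supplies the absolute value.
noncomputable def arcsineHilbertPrimitive (t s : ℝ) : ℝ :=
  (log (arcsineHilbertArg t s) - log (t - s)) / √(t * (1 - t))

section ArcsineHilbert

variable {t s : ℝ}

theorem arcsineHilbertArg_pos (ht : t ∈ Ioo 0 1) (hs : s ∈ Icc 0 1) :
    0 < arcsineHilbertArg t s := by
  obtain ⟨ht0, ht1⟩ := ht
  obtain ⟨hs0, hs1⟩ := hs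
  have : 0 < t + s - 2 * t * s := by nlinarith [mul_nonneg hs0 (sub_nonneg.2 ht1.le)]
  unfold arcsineHilbertArg
  positivity

@[fun_prop]
theorem continuous_arcsineHilbertArg (t : ℝ) : Continuous (arcsineHilbertArg t) := by
  unfold arcsineHilbertArg
  fun_prop

theorem arcsineHilbertPrimitive_zero : arcsineHilbertPrimitive t 0 = 0 := by
  simp [arcsineHilbertPrimitive, arcsineHilbertArg]

theorem arcsineHilbertPrimitive_one : arcsineHilbertPrimitive t 1 = 0 := by
  rw [arcsineHilbertPrimitive, arcsineHilbertArg, show t + 1 - 2 * t * 1 = -(t - 1) by ring,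
    sub_self, mul_zero, sqrt_zero, mul_zero, add_zero, log_neg_eq_log, sub_self, zero_div]

theorem continuousOn_arcsineHilbertPrimitive (ht : t ∈ Ioo 0 1) :
    ContinuousOn (arcsineHilbertPrimitive t) (Icc 0 1 \ {t}) := by
  refine ContinuousOn.div_const (ContinuousOn.sub ?_ ?_) _
  · exact (continuous_arcsineHilbertArg t).continuousOn.log
      fun s hs => (arcsineHilbertArg_pos ht hs.1).ne'
  · exact (continuous_const.sub continuous_id).continuousOn.log
      fun s hs => sub_ne_zero.2 (Ne.symm hs.2)

theorem hasDerivAt_sqrt_mul_one_sub (hs : s ∈ Ioo 0 1) :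
    HasDerivAt (fun s : ℝ => √(s * (1 - s))) ((1 - 2 * s) / (2 * √(s * (1 - s)))) s := by
  have h : HasDerivAt (fun s : ℝ => s * (1 - s)) (1 - 2 * s) s :=
    ((hasDerivAt_id' s).mul ((hasDerivAt_id' s).const_sub 1)).congr_deriv (by ring)
  exact h.sqrt (mul_pos hs.1 (sub_pos.2 hs.2)).ne'

theorem hasDerivAt_arcsineHilbertPrimitive (ht : t ∈ Ioo 0 1) (hs : s ∈ Ioo 0 1) (hst : s ≠ t) :
    HasDerivAt (arcsineHilbertPrimitive t) (1 / √(s * (1 - s)) / (t - s)) s := by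
  set c := √(t * (1 - t))
  set φ := √(s * (1 - s))
  have hc : 0 < c := sqrt_pos.2 (by nlinarith [ht.1, ht.2])
  have hφ : 0 < φ := sqrt_pos.2 (by nlinarith [hs.1, hs.2])
  have hc2 : c ^ 2 = t * (1 - t) := sq_sqrt (by nlinarith [ht.1, ht.2])
  have hφ2 : φ ^ 2 = s * (1 - s) := sq_sqrt (by nlinarith [hs.1, hs.2])
  have hG := arcsineHilbertArg_pos ht (Ioo_subset_Icc_self hs)
  have hts : t - s ≠ 0 := sub_ne_zero.2 (Ne.symm hst)
  have hdG : HasDerivAt (arcsineHilbertArg t)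
      (1 - 2 * t + 2 * c * ((1 - 2 * s) / (2 * φ))) s := by
    have h := ((hasDerivAt_id s).const_add t).sub ((hasDerivAt_id s).const_mul (2 * t))
    exact (h.congr_deriv (by ring)).add ((hasDerivAt_sqrt_mul_one_sub hs).const_mul (2 * c))
  have hdF : HasDerivAt (arcsineHilbertPrimitive t)
      (((1 - 2 * t + 2 * c * ((1 - 2 * s) / (2 * φ))) / arcsineHilbertArg t s
        - -1 / (t - s)) / c) s :=
    ((hdG.log hG.ne').sub (((hasDerivAt_id' s).const_sub t).log hts)).div_const c
  refine hdF.congr_deriv ?_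
  simp only [arcsineHilbertArg] at hG ⊢
  field_simp
  linear_combination (2 * c) * hφ2 - (2 * φ) * hc2

theorem arcsineHilbertPrimitive_sub_sub_add (ε : ℝ) :
    arcsineHilbertPrimitive t (t - ε) - arcsineHilbertPrimitive t (t + ε) =
      (log (arcsineHilbertArg t (t - ε)) - log (arcsineHilbertArg t (t + ε))) / √(t * (1 - t)) := by
  simp only [arcsineHilbertPrimitive, sub_sub_cancel, sub_add_cancel_left, log_neg_eq_log]
  ring

theorem tendsto_arcsineHilbertPrimitive_sub_sub_add (ht : t ∈ Ioo 0 1) :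
    Tendsto (fun ε => arcsineHilbertPrimitive t (t - ε) - arcsineHilbertPrimitive t (t + ε))
      (𝓝 0) (𝓝 0) := by
  have hG := (arcsineHilbertArg_pos ht (Ioo_subset_Icc_self ht)).ne'
  have : ContinuousAt (fun ε => (log (arcsineHilbertArg t (t - ε))
      - log (arcsineHilbertArg t (t + ε))) / √(t * (1 - t))) 0 := by
    fun_prop (disch := simpa using hG)
  simpa [arcsineHilbertPrimitive_sub_sub_add] using this.tendsto

end ArcsineHilbert

theorem stmt14 :
    ∀ t ∈ Set.Ioo (0:ℝ) 1,
      pvIntegral (fun s => 1 / Real.sqrt (s * (1 - s))) t 0 := by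
  intro t ht
  have hpv : ∀ ε ∈ Ioo 0 (min t (1 - t)),
      ∫ s in Ioo 0 1 \ Ioo (t - ε) (t + ε), 1 / √(s * (1 - s)) / (t - s) =
        arcsineHilbertPrimitive t (t - ε) - arcsineHilbertPrimitive t (t + ε) := by
    rintro ε ⟨hε, hεt⟩
    rw [setIntegral_Ioo_diff_Ioo_eq_of_hasDerivAt hε (by linarith [min_le_left t (1 - t)])
      (by linarith [min_le_right t (1 - t)]) (continuousOn_arcsineHilbertPrimitive ht)
      (fun s hs hst => hasDerivAt_arcsineHilbertPrimitive ht hs hst)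
      (fun s hs => div_nonneg (by positivity) (sub_nonneg.2 hs.2.le))
      (fun s hs => div_nonpos_of_nonneg_of_nonpos (by positivity) (sub_nonpos.2 hs.1.le)),
      arcsineHilbertPrimitive_zero, arcsineHilbertPrimitive_one, sub_self, zero_add]
  refine ((tendsto_arcsineHilbertPrimitive_sub_sub_add ht).mono_left nhdsWithin_le_nhds).congr' ?_
  filter_upwards [Ioo_mem_nhdsGT (lt_min ht.1 (sub_pos.2 ht.2))] with ε hε
  exact (hpv ε hε).symm
end

section
/- Define ρ(t) := (1/π)√((2−t)/t) for t ∈ (0,2). Then ρ is a probability density on (0,2) (i.e., ∫₀² ρ(t) dt = 1), and there exists a constant C such that ∫₀² (−log|t−s|) ρ(s) ds + t = C for all t ∈ (0,2). -/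
/-!
Substituting `s = 1 - cos θ` turns `ρ(s) ds` into `(1 + cos θ) dθ / π`, and for `t = 1 - cos φ`
the potential becomes `-(1/π) ∫₀^π log |cos θ - cos φ| (1 + cos θ) dθ`. Writing
`cos θ - cos φ = -2 sin ((θ + φ)/2) sin ((θ - φ)/2)` and using that `log |sin|` is `π`-periodic,
this reduces to `∫₀^π log (sin u) (1 + cos (2u - φ)) du = -π log 2 - (π/2) cos φ`
(the classical `∫₀^π log sin = -π log 2` plus an explicit antiderivative). So the potential equals
`log 2 + cos φ = log 2 + 1 - t`.
-/

open Real MeasureTheory intervalIntegral Set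

lemma image_one_sub_cos_Icc : (fun θ => 1 - cos θ) '' Icc 0 π = Icc 0 2 := by
  rw [← image_image (fun x => 1 - x) cos, bijOn_cos.image_eq, image_const_sub_Icc]
  norm_num

lemma integral_zero_two_eq_integral_sin_smul {E : Type*} [NormedAddCommGroup E] [NormedSpace ℝ E]
    (g : ℝ → E) : ∫ s in (0:ℝ)..2, g s = ∫ θ in (0:ℝ)..π, sin θ • g (1 - cos θ) := by
  rw [integral_of_le zero_le_two, integral_of_le pi_pos.le, ← integral_Icc_eq_integral_Ioc,
    ← integral_Icc_eq_integral_Ioc, ← image_one_sub_cos_Icc,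
    integral_image_eq_integral_abs_deriv_smul measurableSet_Icc
      (fun θ _ => by simpa using ((hasDerivAt_cos θ).const_sub 1).hasDerivWithinAt)
      (fun a ha b hb h => injOn_cos ha hb (by simpa using h))]
  refine setIntegral_congr_fun measurableSet_Icc fun θ hθ => ?_
  rw [abs_of_nonneg (sin_nonneg_of_nonneg_of_le_pi hθ.1 hθ.2)]

lemma sin_mul_sqrt_eq_one_add_cos {θ : ℝ} (hθ : θ ∈ Ioc 0 π) :
    sin θ * √((2 - (1 - cos θ)) / (1 - cos θ)) = 1 + cos θ := by
  have hcos : cos θ < 1 := by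
    simpa using strictAntiOn_cos (left_mem_Icc.2 pi_pos.le) (Ioc_subset_Icc_self hθ) hθ.1
  have hcos_ge : -1 ≤ cos θ := neg_one_le_cos θ
  rw [sin_eq_sqrt_one_sub_cos_sq hθ.1.le hθ.2, ← sqrt_mul (by nlinarith),
    show (1 - cos θ ^ 2) * ((2 - (1 - cos θ)) / (1 - cos θ)) = (1 + cos θ) ^ 2 by
      field_simp [(sub_pos.2 hcos).ne']; ring,
    sqrt_sq (by linarith)]

lemma integral_mul_sqrt_two_sub_div_eq (g : ℝ → ℝ) :
    ∫ s in (0:ℝ)..2, g s * ((1 / π) * √((2 - s) / s)) =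
      (1 / π) * ∫ θ in (0:ℝ)..π, g (1 - cos θ) * (1 + cos θ) := by
  rw [integral_zero_two_eq_integral_sin_smul, ← intervalIntegral.integral_const_mul]
  refine integral_congr_ae (Filter.Eventually.of_forall fun θ hθ => ?_)
  rw [uIoc_of_le pi_pos.le] at hθ
  rw [smul_eq_mul, ← sin_mul_sqrt_eq_one_add_cos hθ]
  ring

lemma log_abs_cos_sub_cos {θ φ : ℝ} (h₁ : sin ((θ + φ) / 2) ≠ 0) (h₂ : sin ((θ - φ) / 2) ≠ 0) :
    log |cos θ - cos φ| = log 2 + log (sin ((θ + φ) / 2)) + log (sin ((θ - φ) / 2)) := by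
  rw [cos_sub_cos, log_abs, log_mul (by simpa using h₁) h₂, log_mul (by norm_num) h₁,
    log_neg_eq_log]

lemma integral_log_sin_mul_cos_two_mul_sub (φ : ℝ) :
    ∫ u in (0:ℝ)..π, log (sin u) * cos (2 * u - φ) = -(π / 2 * cos φ) := by
  -- continuous on all of `ℝ`, since `x * log x` is
  let H : ℝ → ℝ := fun u =>
    cos (u - φ) * (sin u * log (sin u)) - sin (2 * u - φ) / 4 - u * cos φ / 2
  have hH : ∀ u ∈ Ioo 0 π, HasDerivAt H (log (sin u) * cos (2 * u - φ)) u := by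
    intro u hu
    have hsin : sin u ≠ 0 := (sin_pos_of_pos_of_lt_pi hu.1 hu.2).ne'
    have hderiv := ((((hasDerivAt_cos (u - φ)).comp u ((hasDerivAt_id u).sub_const φ)).mul
      ((hasDerivAt_mul_log hsin).comp u (hasDerivAt_sin u))).sub
      (((hasDerivAt_sin (2 * u - φ)).comp u
        (((hasDerivAt_id u).const_mul 2).sub_const φ)).div_const 4)).sub
      (((hasDerivAt_id u).mul_const (cos φ)).div_const 2)
    refine HasDerivAt.congr_deriv (f := H) hderiv ?_
    simp only [Function.comp, id, cos_sub, sin_sub, cos_two_mul, sin_two_mul]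
    linear_combination (-cos φ * log (sin u)) * sin_sq_add_cos_sq u
  rw [integral_eq_sub_of_hasDerivAt_of_le pi_pos.le (by fun_prop) hH
    (intervalIntegrable_log_sin.mul_continuousOn (by fun_prop))]
  simp only [H, mul_zero, sin_sub, cos_sub, sin_zero, cos_zero, sin_pi, sin_two_pi, cos_two_pi]
  ring

lemma integral_log_abs_cos_sub_cos_mul {c : ℝ → ℝ} (hc : Continuous c) (hc_even : c.Even)
    (hc_per : Function.Periodic c (2 * π)) {φ : ℝ} (hφ : φ ∈ Ioo 0 π) :
    ∫ θ in (0:ℝ)..π, log |cos θ - cos φ| * c θ =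
      log 2 * (∫ θ in (0:ℝ)..π, c θ) + 2 * ∫ u in (0:ℝ)..π, log (sin u) * c (2 * u - φ) := by
  set F : ℝ → ℝ := fun u => log (sin u) * c (2 * u - φ)
  have hF_per : Function.Periodic F π := fun u => by
    simp only [F, sin_add_pi, log_neg_eq_log, show 2 * (u + π) - φ = 2 * u - φ + 2 * π by ring,
      hc_per _]
  have hF_int : ∀ a b, IntervalIntegrable F volume a b := fun a b =>
    intervalIntegrable_log_sin.mul_continuousOn (by fun_prop)
  -- the two half-angle terms are integrals of `F` over the two halves of `[φ/2, φ/2 + π]`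
  have h_plus : ∫ θ in (0:ℝ)..π, log (sin ((θ + φ) / 2)) * c θ
      = 2 * ∫ u in φ / 2..π / 2 + φ / 2, F u := by
    have e := integral_comp_div_add F (a := 0) (b := π) two_ne_zero (φ / 2)
    rw [zero_div, zero_add, smul_eq_mul] at e
    rw [← e]
    refine integral_congr fun θ _ => ?_
    simp only [F]
    ring_nf
  have h_minus : ∫ θ in (0:ℝ)..π, log (sin ((θ - φ) / 2)) * c θ
      = 2 * ∫ u in π / 2 + φ / 2..π + φ / 2, F u := by
    have e := integral_comp_sub_div F (a := 0) (b := π) two_ne_zero (π + φ / 2)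
    rw [zero_div, sub_zero, smul_eq_mul, show π + φ / 2 - π / 2 = π / 2 + φ / 2 by ring] at e
    rw [← e]
    refine integral_congr fun θ _ => ?_
    simp only [F]
    rw [show π + φ / 2 - θ / 2 = π - (θ - φ) / 2 by ring, sin_pi_sub,
      show 2 * (π - (θ - φ) / 2) - φ = -θ + 2 * π by ring, hc_per, hc_even]
  have h_ae : ∀ᵐ θ, θ ∈ uIoc 0 π → log |cos θ - cos φ| * c θ
      = log 2 * c θ + log (sin ((θ + φ) / 2)) * c θ + log (sin ((θ - φ) / 2)) * c θ := by
    filter_upwards [(countable_singleton φ).ae_notMem volume] with θ hne hθ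
    rw [uIoc_of_le pi_pos.le] at hθ
    have h₁ : sin ((θ + φ) / 2) ≠ 0 :=
      (sin_pos_of_pos_of_lt_pi (by linarith [hθ.1, hφ.1]) (by linarith [hθ.2, hφ.2])).ne'
    have h₂ : sin ((θ - φ) / 2) ≠ 0 := by
      rw [Ne, sin_eq_zero_iff_of_lt_of_lt (by linarith [hθ.1, hφ.2, pi_pos])
        (by linarith [hθ.2, hφ.1, pi_pos])]
      exact fun h => hne (show θ = φ by linarith)
    rw [log_abs_cos_sub_cos h₁ h₂]
    ring
  have hc_int : IntervalIntegrable c volume 0 π := hc.intervalIntegrable 0 π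
  have h_int : ∀ ψ, IntervalIntegrable (fun θ => log (sin ((θ + ψ) / 2)) * c θ) volume 0 π :=
    fun ψ => (MeromorphicOn.intervalIntegrable_log (AnalyticOnNhd.meromorphicOn
      fun _ _ => by fun_prop)).mul_continuousOn hc.continuousOn
  have h_minus_int : IntervalIntegrable (fun θ => log (sin ((θ - φ) / 2)) * c θ) volume 0 π := by
    simpa only [sub_eq_add_neg] using h_int (-φ)
  rw [integral_congr_ae h_ae, integral_add ((hc_int.const_mul _).add (h_int φ)) h_minus_int,
    integral_add (hc_int.const_mul _) (h_int φ), intervalIntegral.integral_const_mul,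
    h_plus, h_minus,
    add_assoc, ← mul_add, integral_add_adjacent_intervals (hF_int _ _) (hF_int _ _),
    show π + φ / 2 = φ / 2 + π by ring, hF_per.intervalIntegral_add_eq (φ / 2) 0, zero_add]

lemma integral_log_abs_cos_sub_cos_mul_one_add_cos {φ : ℝ} (hφ : φ ∈ Ioo 0 π) :
    ∫ θ in (0:ℝ)..π, log |cos θ - cos φ| * (1 + cos θ) = -(π * (log 2 + cos φ)) := by
  rw [integral_log_abs_cos_sub_cos_mul (c := fun θ => 1 + cos θ) (by fun_prop)
      (fun θ => by simp only [cos_neg]) (fun θ => by simp only [cos_periodic θ]) hφ]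
  simp_rw [mul_add, mul_one]
  rw [integral_add intervalIntegrable_const intervalIntegrable_cos,
    integral_add (f := fun u => log (sin u)) (g := fun u => log (sin u) * cos (2 * u - φ))
      intervalIntegrable_log_sin (intervalIntegrable_log_sin.mul_continuousOn (by fun_prop)),
    integral_log_sin_zero_pi, integral_log_sin_mul_cos_two_mul_sub, integral_cos]
  simp only [intervalIntegral.integral_const, smul_eq_mul, sin_pi, sin_zero]
  ring

theorem stmt17 :
    (∫ t in (0:ℝ)..2, (1 / Real.pi) * Real.sqrt ((2 - t) / t) = 1) ∧
    ∃ C : ℝ, ∀ t ∈ Set.Ioo (0:ℝ) 2,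
      (∫ s in (0:ℝ)..2, (-Real.log |t - s|) * ((1 / Real.pi) * Real.sqrt ((2 - s) / s))) + t
        = C := by
  constructor
  · have := integral_mul_sqrt_two_sub_div_eq fun _ => 1
    simp only [one_mul] at this
    rw [this, integral_add intervalIntegrable_const intervalIntegrable_cos, integral_cos]
    simp [pi_ne_zero]
  · refine ⟨1 + log 2, fun t ht => ?_⟩
    obtain ⟨φ, hφ, rfl⟩ : ∃ φ ∈ Ioo 0 π, 1 - cos φ = t :=
      ⟨arccos (1 - t), ⟨arccos_pos.2 (by linarith [ht.1]), arccos_lt_pi.2 (by linarith [ht.2])⟩,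
        by rw [cos_arccos (by linarith [ht.2]) (by linarith [ht.1])]; ring⟩
    simp_rw [integral_mul_sqrt_two_sub_div_eq fun s => -log |1 - cos φ - s|,
      sub_sub_sub_cancel_left, neg_mul, intervalIntegral.integral_neg,
      integral_log_abs_cos_sub_cos_mul_one_add_cos hφ]
    field_simp
    ring
end

section
/- Let 0 < a < 1, γ > 0, set t₂ := [ (γ/(2π)) · cos(aπ/2) · Γ((1+a)/2)² / (a²Γ(a)) ]^(−1/(1+a)), and define ρ(t) := γ·(cos(aπ/2)/(πa)) · (t₂−t)^((1+a)/2) · t^(−(1−a)/2) for t ∈ (0,t₂). Then ∫₀^{t₂} ρ(t) dt = 1. -/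
open Real MeasureTheory intervalIntegral

lemma beta_scaled_real (u v c : ℝ) (hu : 0 < u) (hv : 0 < v) (hc : 0 < c) :
    ∫ x in (0:ℝ)..c, x ^ (u - 1) * (c - x) ^ (v - 1) =
      c ^ (u + v - 1) * (Real.Gamma u * Real.Gamma v / Real.Gamma (u + v)) := by
  have hG : Real.Gamma (u + v) ≠ 0 := (Real.Gamma_pos_of_pos (by linarith)).ne'
  have hbeta : Complex.betaIntegral u v =
      ((Real.Gamma u * Real.Gamma v / Real.Gamma (u + v) : ℝ) : ℂ) := by
    have h := Complex.Gamma_mul_Gamma_eq_betaIntegral (s := (u:ℂ)) (t := (v:ℂ))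
      (by simpa using hu) (by simpa using hv)
    have huv : ((u:ℂ) + v) = ((u + v : ℝ) : ℂ) := by push_cast; ring
    rw [huv, Complex.Gamma_ofReal, Complex.Gamma_ofReal, Complex.Gamma_ofReal] at h
    have hGc : ((Real.Gamma (u + v)) : ℂ) ≠ 0 := by exact_mod_cast hG
    rw [Complex.ofReal_div, Complex.ofReal_mul, eq_div_iff hGc]
    linear_combination -h
  have hs := Complex.betaIntegral_scaled (u:ℂ) (v:ℂ) hc
  have hL : (∫ x in (0:ℝ)..c, (x:ℂ) ^ ((u:ℂ) - 1) * ((c:ℂ) - x) ^ ((v:ℂ) - 1)) =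
      ((∫ x in (0:ℝ)..c, x ^ (u - 1) * (c - x) ^ (v - 1) : ℝ) : ℂ) := by
    rw [← intervalIntegral.integral_ofReal]
    apply intervalIntegral.integral_congr
    intro x hx
    rw [Set.uIcc_of_le hc.le] at hx
    have hx0 : (0:ℝ) ≤ x := hx.1
    have hx1 : (0:ℝ) ≤ c - x := by linarith [hx.2]
    dsimp only
    rw [Complex.ofReal_mul, Complex.ofReal_cpow hx0, Complex.ofReal_cpow hx1]
    push_cast
    ring
  rw [hL, hbeta] at hs
  have hR : ((c:ℂ)) ^ ((u:ℂ) + v - 1) = ((c ^ (u + v - 1) : ℝ) : ℂ) := by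
    rw [Complex.ofReal_cpow hc.le]; push_cast; ring_nf
  rw [hR, ← Complex.ofReal_mul] at hs
  exact_mod_cast hs

theorem stmt18 (a γ : ℝ) (ha0 : 0 < a) (ha1 : a < 1) (hγ : 0 < γ) (t₂ : ℝ)
    (ht₂ : t₂ = (γ / (2 * Real.pi) * Real.cos (a * Real.pi / 2) *
      Real.Gamma ((1 + a) / 2) ^ 2 / (a ^ 2 * Real.Gamma a)) ^ (-(1 / (1 + a)))) :
    ∫ t in (0:ℝ)..t₂,
      γ * (Real.cos (a * Real.pi / 2) / (Real.pi * a)) *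
        (t₂ - t) ^ ((1 + a) / 2) * t ^ (-(1 - a) / 2) = 1 := by
  have hπ := Real.pi_pos
  have hcos : 0 < Real.cos (a * Real.pi / 2) := by
    apply Real.cos_pos_of_mem_Ioo
    constructor
    · nlinarith
    · nlinarith
  have hΓa : 0 < Real.Gamma a := Real.Gamma_pos_of_pos ha0
  have hΓh : 0 < Real.Gamma ((1 + a) / 2) := Real.Gamma_pos_of_pos (by linarith)
  have hC : 0 < γ / (2 * Real.pi) * Real.cos (a * Real.pi / 2) *
      Real.Gamma ((1 + a) / 2) ^ 2 / (a ^ 2 * Real.Gamma a) := by positivity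
  set C := γ / (2 * Real.pi) * Real.cos (a * Real.pi / 2) *
      Real.Gamma ((1 + a) / 2) ^ 2 / (a ^ 2 * Real.Gamma a) with hCdef
  have ht₂pos : 0 < t₂ := by rw [ht₂]; positivity
  -- the beta integral with u = (1+a)/2, v = (3+a)/2
  have hbeta := beta_scaled_real ((1 + a) / 2) ((3 + a) / 2) t₂
    (by linarith) (by linarith) ht₂pos
  have hu1 : (1 + a) / 2 - 1 = -(1 - a) / 2 := by ring
  have hv1 : (3 + a) / 2 - 1 = (1 + a) / 2 := by ring
  have hsum : (1 + a) / 2 + (3 + a) / 2 = 2 + a := by ring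
  rw [hu1, hv1, hsum] at hbeta
  have hmain : (∫ t in (0:ℝ)..t₂,
      γ * (Real.cos (a * Real.pi / 2) / (Real.pi * a)) *
        (t₂ - t) ^ ((1 + a) / 2) * t ^ (-(1 - a) / 2)) =
      γ * (Real.cos (a * Real.pi / 2) / (Real.pi * a)) *
        ∫ t in (0:ℝ)..t₂, t ^ (-(1 - a) / 2) * (t₂ - t) ^ ((1 + a) / 2) := by
    rw [← intervalIntegral.integral_const_mul]
    apply intervalIntegral.integral_congr
    intro x _; ring
  -- Gamma recurrences
  have hG1 : Real.Gamma ((3 + a) / 2) = (1 + a) / 2 * Real.Gamma ((1 + a) / 2) := by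
    have : (3 + a) / 2 = (1 + a) / 2 + 1 := by ring
    rw [this, Real.Gamma_add_one (by linarith)]
  have hG2 : Real.Gamma (2 + a) = (1 + a) * (a * Real.Gamma a) := by
    have h1 : (2 : ℝ) + a = (1 + a) + 1 := by ring
    rw [h1, Real.Gamma_add_one (by linarith), add_comm 1 a, Real.Gamma_add_one ha0.ne']
  have ht2pow : t₂ ^ (2 + a - 1) = C⁻¹ := by
    rw [ht₂, ← Real.rpow_mul hC.le]
    have ha : (1:ℝ) + a ≠ 0 := by linarith
    have hexp : -(1 / (1 + a)) * (2 + a - 1) = -1 := by field_simp; ring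
    rw [hexp, Real.rpow_neg_one]
  rw [hmain, hbeta, hG1, hG2, ht2pow, hCdef]
  have hΓa' : Real.Gamma a ≠ 0 := hΓa.ne'
  field_simp
end
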